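/- arXiv:2308.09683 — 3 statements merged into one kernel-verified Lean document; each statement's English description precedes it below -/
import Mathlib

section
/- If f ∈ ℝ[x₁,…,xₙ] is multiaffine with nonnegative coefficients and log-concave on the positive orthant, then f is strongly log-concave: every iterated partial derivative of f either vanishes identically or is log-concave on the positive orthant. -/
open MvPolynomial Finset Filter

/-- `f` is log-concave over the positive orthant. -/
def LogConcaveOnPos {n : ℕ} (f : MvPolynomial (Fin n) ℝ) : Prop :=
  ∀ x y : Fin n → ℝ, (∀ i, 0 < x i) → (∀ i, 0 < y i) →
    ∀ t : ℝ, 0 < t → t < 1 →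
      (MvPolynomial.eval x f) ^ t * (MvPolynomial.eval y f) ^ (1 - t) ≤
        MvPolynomial.eval (fun i => t * x i + (1 - t) * y i) f

lemma eval_nonneg_of_coeff_nonneg {n : ℕ} (g : MvPolynomial (Fin n) ℝ)
    (hco : ∀ d, 0 ≤ g.coeff d) (x : Fin n → ℝ) (hx : ∀ j, 0 ≤ x j) :
    0 ≤ MvPolynomial.eval x g := by
  rw [eval_eq']
  exact Finset.sum_nonneg fun d _ => mul_nonneg (hco d)
    (Finset.prod_nonneg fun j _ => pow_nonneg (hx j) _)

lemma coeff_pderiv_eq {n : ℕ} (g : MvPolynomial (Fin n) ℝ) (i : Fin n) (d : Fin n →₀ ℕ) :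
    (MvPolynomial.pderiv i g).coeff d =
      ∑ e ∈ g.support, (MvPolynomial.monomial (e - Finsupp.single i 1)
        (g.coeff e * (e i : ℝ))).coeff d := by
  conv_lhs => rw [g.as_sum, map_sum, coeff_sum]
  simp [pderiv_monomial]

lemma coeff_pderiv_nonneg {n : ℕ} (g : MvPolynomial (Fin n) ℝ)
    (hco : ∀ d, 0 ≤ g.coeff d) (i : Fin n) :
    ∀ d, 0 ≤ (MvPolynomial.pderiv i g).coeff d := by
  classical
  intro d
  rw [coeff_pderiv_eq]
  refine Finset.sum_nonneg fun e _ => ?_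
  rw [coeff_monomial]
  split
  · exact mul_nonneg (hco e) (Nat.cast_nonneg _)
  · exact le_refl 0

lemma pderiv_multiaffine {n : ℕ} (g : MvPolynomial (Fin n) ℝ)
    (hma : ∀ d ∈ g.support, ∀ i, d i ≤ 1) (i : Fin n) :
    ∀ d ∈ (MvPolynomial.pderiv i g).support, ∀ j, d j ≤ 1 := by
  classical
  intro d hd j
  rw [mem_support_iff, coeff_pderiv_eq] at hd
  obtain ⟨e, he, hne⟩ := Finset.exists_ne_zero_of_sum_ne_zero hd
  rw [coeff_monomial] at hne
  have heq : e - Finsupp.single i 1 = d := by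
    by_contra h; simp [h] at hne
  have : d j ≤ e j := by
    rw [← heq, Finsupp.tsub_apply]
    exact Nat.sub_le _ _
  exact this.trans (hma e he j)

lemma eval_update_eq {n : ℕ} (g : MvPolynomial (Fin n) ℝ)
    (hma : ∀ d ∈ g.support, ∀ i, d i ≤ 1) (i : Fin n) (x : Fin n → ℝ) (s : ℝ) :
    MvPolynomial.eval (Function.update x i s) g =
      s * MvPolynomial.eval x (MvPolynomial.pderiv i g)
        + MvPolynomial.eval (Function.update x i 0) g := by
  classical
  have hπ : MvPolynomial.eval x (MvPolynomial.pderiv i g)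
      = ∑ d ∈ g.support, g.coeff d * (d i : ℝ) *
          ∏ j, x j ^ ((d - Finsupp.single i 1 : Fin n →₀ ℕ) j) := by
    conv_lhs => rw [g.as_sum, map_sum, map_sum]
    refine Finset.sum_congr rfl fun d _ => ?_
    rw [pderiv_monomial, eval_monomial]
    rw [Finsupp.prod_fintype _ _ (fun j => pow_zero (x j))]
  rw [hπ, eval_eq', eval_eq', Finset.mul_sum, ← Finset.sum_add_distrib]
  refine Finset.sum_congr rfl fun d hd => ?_
  have hdi : d i ≤ 1 := hma d hd i
  -- split the products at i
  have split : ∀ (u : Fin n → ℝ) (e : Fin n →₀ ℕ),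
      (∏ j, u j ^ e j) = u i ^ e i * ∏ j ∈ Finset.univ.erase i, u j ^ e j :=
    fun u e => (Finset.mul_prod_erase Finset.univ (fun j => u j ^ e j)
      (Finset.mem_univ i)).symm
  rw [split (Function.update x i s) d, split (Function.update x i 0) d,
    split x (d - Finsupp.single i 1)]
  have h1 : ∀ j ∈ Finset.univ.erase i,
      Function.update x i s j ^ d j = x j ^ d j := by
    intro j hj
    rw [Function.update_of_ne (Finset.mem_erase.mp hj).1]
  have h2 : ∀ j ∈ Finset.univ.erase i,
      Function.update x i 0 j ^ d j = x j ^ d j := by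
    intro j hj
    rw [Function.update_of_ne (Finset.mem_erase.mp hj).1]
  have h3 : ∀ j ∈ Finset.univ.erase i,
      x j ^ ((d - Finsupp.single i 1 : Fin n →₀ ℕ) j) = x j ^ d j := by
    intro j hj
    rw [Finsupp.tsub_apply, Finsupp.single_eq_of_ne'
      (Ne.symm (Finset.mem_erase.mp hj).1), Nat.sub_zero]
  rw [Finset.prod_congr rfl h1, Finset.prod_congr rfl h2, Finset.prod_congr rfl h3,
    Function.update_self, Function.update_self, Finsupp.tsub_apply,
    Finsupp.single_eq_same]
  set P := ∏ j ∈ Finset.univ.erase i, x j ^ d j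
  interval_cases h : d i
  · simp
  · simp; ring

lemma lc_pderiv {n : ℕ} (g : MvPolynomial (Fin n) ℝ)
    (hma : ∀ d ∈ g.support, ∀ i, d i ≤ 1) (hco : ∀ d, 0 ≤ g.coeff d)
    (hlc : LogConcaveOnPos g) (i : Fin n) :
    LogConcaveOnPos (MvPolynomial.pderiv i g) := by
  intro x y hx hy t ht ht1
  set z : Fin n → ℝ := fun j => t * x j + (1 - t) * y j with hz
  set A := MvPolynomial.eval x (MvPolynomial.pderiv i g) with hA'
  set B := MvPolynomial.eval y (MvPolynomial.pderiv i g) with hB'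
  set C := MvPolynomial.eval z (MvPolynomial.pderiv i g) with hC'
  set a := MvPolynomial.eval (Function.update x i 0) g with ha'
  set b := MvPolynomial.eval (Function.update y i 0) g with hb'
  set c := MvPolynomial.eval (Function.update z i 0) g with hc'
  have hzpos : ∀ j, 0 < z j := fun j => by
    have h1 := hx j; have h2 := hy j
    show 0 < t * x j + (1 - t) * y j
    nlinarith
  have upd_nonneg : ∀ (u : Fin n → ℝ), (∀ j, 0 < u j) →
      ∀ j, 0 ≤ Function.update u i 0 j := by
    intro u hu j
    by_cases h : j = i
    · subst h; simp
    · rw [Function.update_of_ne h]; exact (hu j).le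
  have hA : 0 ≤ A := eval_nonneg_of_coeff_nonneg _ (coeff_pderiv_nonneg g hco i) x
    fun j => (hx j).le
  have hB : 0 ≤ B := eval_nonneg_of_coeff_nonneg _ (coeff_pderiv_nonneg g hco i) y
    fun j => (hy j).le
  have ha : 0 ≤ a := eval_nonneg_of_coeff_nonneg _ hco _ (upd_nonneg x hx)
  have hb : 0 ≤ b := eval_nonneg_of_coeff_nonneg _ hco _ (upd_nonneg y hy)
  have key : ∀ s : ℝ, 1 ≤ s →
      (A + a / s) ^ t * (B + b / s) ^ (1 - t) ≤ C + c / s := by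
    intro s hs
    have hs0 : (0 : ℝ) < s := lt_of_lt_of_le one_pos hs
    have hupos : ∀ (u : Fin n → ℝ), (∀ j, 0 < u j) →
        ∀ j, 0 < Function.update u i s j := by
      intro u hu j
      by_cases h : j = i
      · subst h; simpa using hs0
      · rw [Function.update_of_ne h]; exact hu j
    have H := hlc (Function.update x i s) (Function.update y i s)
      (hupos x hx) (hupos y hy) t ht ht1
    have hcomb : (fun j => t * Function.update x i s j
        + (1 - t) * Function.update y i s j) = Function.update z i s := by
      funext j
      by_cases h : j = i
      · subst h; simp; ring
      · simp [Function.update_of_ne h, hz]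
    rw [hcomb, eval_update_eq g hma i x s, eval_update_eq g hma i y s,
      eval_update_eq g hma i z s] at H
    have e1 : A + a / s = (s * A + a) / s := by field_simp
    have e2 : B + b / s = (s * B + b) / s := by field_simp
    have e3 : C + c / s = (s * C + c) / s := by field_simp
    rw [e1, e2, e3, Real.div_rpow (by positivity) hs0.le,
      Real.div_rpow (by positivity) hs0.le, div_mul_div_comm]
    have hst : s ^ t * s ^ (1 - t) = s := by
      rw [← Real.rpow_add hs0]; simp
    rw [hst]
    exact div_le_div_of_nonneg_right H hs0.le |>.trans_eq rfl
  have lim : ∀ (u v : ℝ), Filter.Tendsto (fun s : ℝ => u + v / s) atTop (nhds u) := by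
    intro u v
    have h0 : Filter.Tendsto (fun s : ℝ => v / s) atTop (nhds 0) :=
      Filter.Tendsto.div_atTop tendsto_const_nhds tendsto_id
    simpa using (tendsto_const_nhds (x := u) (f := atTop)).add h0
  have r1 : Filter.Tendsto (fun s : ℝ => (A + a / s) ^ t) atTop (nhds (A ^ t)) :=
    ((Real.continuousAt_rpow_const A t (Or.inr ht.le)).tendsto).comp (lim A a)
  have r2 : Filter.Tendsto (fun s : ℝ => (B + b / s) ^ (1 - t)) atTop
      (nhds (B ^ (1 - t))) :=
    ((Real.continuousAt_rpow_const B (1 - t) (Or.inr (by linarith))).tendsto).comp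
      (lim B b)
  refine le_of_tendsto_of_tendsto (r1.mul r2) (lim C c) ?_
  filter_upwards [eventually_ge_atTop 1] with s hs using key s hs

/-- A multiaffine polynomial with nonnegative coefficients that is log-concave
on the positive orthant is strongly log-concave: every iterated partial
derivative either vanishes identically or is log-concave on the positive orthant. -/
theorem multiaffine_log_concave_implies_strongly_log_concave {n : ℕ}
    (f : MvPolynomial (Fin n) ℝ)
    (hma : ∀ d ∈ f.support, ∀ i, d i ≤ 1)
    (hcoeff : ∀ d, 0 ≤ f.coeff d)
    (hlc : LogConcaveOnPos f) :
    ∀ L : List (Fin n),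
      L.foldr (fun i p => MvPolynomial.pderiv i p) f = 0 ∨
        LogConcaveOnPos (L.foldr (fun i p => MvPolynomial.pderiv i p) f) := by
  have main : ∀ L : List (Fin n),
      (∀ d ∈ (L.foldr (fun i p => MvPolynomial.pderiv i p) f).support, ∀ i, d i ≤ 1) ∧
      (∀ d, 0 ≤ (L.foldr (fun i p => MvPolynomial.pderiv i p) f).coeff d) ∧
      LogConcaveOnPos (L.foldr (fun i p => MvPolynomial.pderiv i p) f) := by
    intro L
    induction L with
    | nil => exact ⟨hma, hcoeff, hlc⟩
    | cons i L ih =>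
      obtain ⟨h1, h2, h3⟩ := ih
      simp only [List.foldr_cons]
      exact ⟨pderiv_multiaffine _ h1 i, coeff_pderiv_nonneg _ h2 i,
        lc_pderiv _ h1 h2 h3 i⟩
  exact fun L => Or.inr (main L).2.2
end

section
/- Let T ⊆ X ∪ Y with |T| = n − 1 and T ∩ X ∈ I, where X = {x₁,…,xₙ} has weights λᵢ > 0 and Y = {y₁,…,yₙ}. Consider the proposal distribution ν on (X ∪ Y) \ T with ν(xᵢ) ∝ λᵢ for xᵢ ∈ X \ T and ν(y) ∝ (n − |T∩X|)/(1 + |T∩X|) for y ∈ Y \ T. Then the probability under ν that the proposed element e satisfies (T ∪ {e}) ∩ X ∉ I is at most λ_max / (1 + λ_max), where λ_max = max_i λᵢ. -/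
/-- The rejection probability of the proposal distribution `ν` is at most
`λ_max / (1 + λ_max)`. Here `T` is encoded by `TX = T ∩ X` and `TY = T ∩ Y`,
with `|T| = n − 1` and `TX` independent. The probability that the proposed
element `e` satisfies `(T ∪ {e}) ∩ X ∉ I` is the `ν`-mass of the rejected
`x`-elements divided by the total `ν`-mass. -/
theorem rejection_probability_bound {n : ℕ} (hn : 0 < n)
    (I : Finset (Finset (Fin n)))
    (hempty : ∅ ∈ I)
    (hdown : ∀ S ∈ I, ∀ T ⊆ S, T ∈ I)
    (hexch : ∀ S ∈ I, ∀ T ∈ I, T.card < S.card → ∃ i ∈ S, i ∉ T ∧ insert i T ∈ I)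
    (lam : Fin n → ℝ) (hlam : ∀ i, 0 < lam i)
    (TX TY : Finset (Fin n))
    (hcard : TX.card + TY.card = n - 1) (hTX : TX ∈ I) :
    (∑ i ∈ TXᶜ.filter (fun i => insert i TX ∉ I), lam i) /
        ((∑ i ∈ TXᶜ, lam i) +
          (TYᶜ.card : ℝ) * (((n : ℝ) - TX.card) / (1 + TX.card)))
      ≤ (Finset.univ.sup' ⟨⟨0, hn⟩, Finset.mem_univ _⟩ lam) /
          (1 + Finset.univ.sup' ⟨⟨0, hn⟩, Finset.mem_univ _⟩ lam) := by
  set M := Finset.univ.sup' ⟨⟨0, hn⟩, Finset.mem_univ _⟩ lam with hM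
  have hMpos : 0 < M := lt_of_lt_of_le (hlam ⟨0, hn⟩)
    (Finset.le_sup' lam (Finset.mem_univ _))
  have hle : ∀ i, lam i ≤ M := fun i => Finset.le_sup' lam (Finset.mem_univ i)
  -- card facts
  have hTXlt : TX.card < n := by omega
  have hTYlt : TY.card < n := by
    have := TX.card_le_univ
    simp only [Finset.card_univ, Fintype.card_fin] at this
    omega
  have hTYc : TYᶜ.card = 1 + TX.card := by
    have h1 : TYᶜ.card = n - TY.card := by
      rw [Finset.card_compl, Fintype.card_fin]
    omega
  have hTXc : TXᶜ.card = n - TX.card := by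
    rw [Finset.card_compl, Fintype.card_fin]
  -- simplify the Y mass term
  have hy : (TYᶜ.card : ℝ) * (((n : ℝ) - TX.card) / (1 + TX.card))
      = (TXᶜ.card : ℝ) := by
    rw [hTYc, hTXc]
    have h1 : (1 : ℝ) + TX.card ≠ 0 := by positivity
    push_cast [Nat.cast_sub hTXlt.le]
    field_simp
  rw [hy]
  have hDeq : (∑ i ∈ TXᶜ, lam i) + (TXᶜ.card : ℝ)
      = ∑ i ∈ TXᶜ, (lam i + 1) := by
    rw [Finset.sum_add_distrib, Finset.sum_const, nsmul_eq_mul, mul_one]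
  rw [hDeq]
  have hne : TXᶜ.Nonempty := by
    rw [← Finset.card_pos, hTXc]; omega
  have hDpos : 0 < ∑ i ∈ TXᶜ, (lam i + 1) :=
    Finset.sum_pos (fun i _ => by linarith [hlam i]) hne
  rw [div_le_div_iff₀ hDpos (by linarith)]
  calc (∑ i ∈ TXᶜ.filter (fun i => insert i TX ∉ I), lam i) * (1 + M)
      ≤ (∑ i ∈ TXᶜ, lam i) * (1 + M) := by
        apply mul_le_mul_of_nonneg_right _ (by linarith)
        exact Finset.sum_le_sum_of_subset_of_nonneg (Finset.filter_subset _ _)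
          (fun i _ _ => (hlam i).le)
    _ ≤ M * ∑ i ∈ TXᶜ, (lam i + 1) := by
        rw [Finset.sum_mul, Finset.mul_sum]
        apply Finset.sum_le_sum
        intro i _
        nlinarith [hle i, (hlam i).le, hMpos.le]
end

section
/- Let λ₁,…,λₙ > 0 with λ_min = min_i λᵢ, let 0 ≤ q ≤ 1, and let T ⊆ X ∪ Y with |T| = n + 1, T ∩ X ≠ ∅, T ∩ Y ≠ ∅. Consider the proposal distribution ν on T with ν(e) ∝ |T∩X|/|T∩Y| for e ∈ T∩Y and ν(xⱼ) ∝ λⱼ⁻¹ for xⱼ ∈ T∩X, followed by rejecting a proposed xⱼ ∈ T∩X with probability 1 − q whenever rk(T∩X \ {xⱼ}) = rk(T∩X) − 1. Then the probability of rejection is at most (1 − q)/(1 + λ_min). -/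
/-- Rejection bound for the random cluster down step: with proposal weights
`|T∩X|/|T∩Y|` on each element of `T∩Y` and `λⱼ⁻¹` on each `xⱼ ∈ T∩X`, and
rejection with probability `1 − q` when removing `xⱼ` drops the rank, the
rejection probability is at most `(1 − q)/(1 + λ_min)`. -/
theorem rc_rejection_probability_bound {n : ℕ} (hn : 0 < n)
    (lam : Fin n → ℝ) (hlam : ∀ i, 0 < lam i)
    (q : ℝ) (hq0 : 0 ≤ q) (hq1 : q ≤ 1)
    (rk : Finset (Fin n) → ℕ) (hrk0 : rk ∅ = 0)
    (hmono : ∀ S T : Finset (Fin n), S ⊆ T → rk S ≤ rk T)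
    (hunit : ∀ (S : Finset (Fin n)) (e : Fin n), rk (insert e S) ≤ rk S + 1)
    (hsub : ∀ S T : Finset (Fin n), rk (S ∪ T) + rk (S ∩ T) ≤ rk S + rk T)
    (TX TY : Finset (Fin n)) (hcard : TX.card + TY.card = n + 1)
    (hTXne : TX.Nonempty) (hTYne : TY.Nonempty) :
    ((1 - q) * ∑ j ∈ TX.filter (fun j => rk (TX.erase j) + 1 = rk TX), (lam j)⁻¹) /
        ((∑ j ∈ TX, (lam j)⁻¹) + (TY.card : ℝ) * ((TX.card : ℝ) / (TY.card : ℝ)))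
      ≤ (1 - q) / (1 + Finset.univ.inf' ⟨⟨0, hn⟩, Finset.mem_univ _⟩ lam) := by
  set L := Finset.univ.inf' ⟨⟨0, hn⟩, Finset.mem_univ _⟩ lam with hL
  have hLpos : 0 < L := by
    obtain ⟨i, _, hi⟩ := Finset.exists_mem_eq_inf' ⟨⟨0, hn⟩, Finset.mem_univ _⟩ lam
    rw [hL, hi]; exact hlam i
  have hLle : ∀ i, L ≤ lam i := fun i =>
    Finset.inf'_le _ (Finset.mem_univ i)
  have hTY : (TY.card : ℝ) ≠ 0 := by
    exact_mod_cast Finset.card_ne_zero_of_mem hTYne.choose_spec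
  have hden : (TY.card : ℝ) * ((TX.card : ℝ) / (TY.card : ℝ)) = (TX.card : ℝ) := by
    field_simp
  rw [hden]
  set S := ∑ j ∈ TX, (lam j)⁻¹ with hS
  set S' := ∑ j ∈ TX.filter (fun j => rk (TX.erase j) + 1 = rk TX), (lam j)⁻¹ with hS'
  have hS'nonneg : 0 ≤ S' :=
    Finset.sum_nonneg fun j _ => le_of_lt (inv_pos.mpr (hlam j))
  have hS'S : S' ≤ S :=
    Finset.sum_le_sum_of_subset_of_nonneg (Finset.filter_subset _ _)
      (fun j _ _ => le_of_lt (inv_pos.mpr (hlam j)))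
  have hSpos : 0 < S := Finset.sum_pos (fun j _ => inv_pos.mpr (hlam j)) hTXne
  have hSm : S * L ≤ (TX.card : ℝ) := by
    have : S ≤ ∑ _j ∈ TX, L⁻¹ :=
      Finset.sum_le_sum fun j _ => inv_anti₀ hLpos (hLle j)
    rw [Finset.sum_const, nsmul_eq_mul] at this
    calc S * L ≤ (TX.card : ℝ) * L⁻¹ * L := by
          exact mul_le_mul_of_nonneg_right this hLpos.le
      _ = (TX.card : ℝ) := by field_simp
  have hmpos : 0 < (TX.card : ℝ) := by exact_mod_cast Finset.card_pos.mpr hTXne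
  have hq' : 0 ≤ 1 - q := by linarith
  rw [div_le_div_iff₀ (by linarith) (by linarith)]
  have key : S' * (1 + L) ≤ S + (TX.card : ℝ) := by
    have h1 : S' * L ≤ (TX.card : ℝ) :=
      le_trans (mul_le_mul_of_nonneg_right hS'S hLpos.le) hSm
    nlinarith
  nlinarith [mul_le_mul_of_nonneg_left key hq']
end
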